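/- Let z ∈ ℂ with Im z < 0 and let t > 0. Then ∫₀ᵗ Im(√(τ − z)) dτ ≥ t·|Im z|/(2·(√t + √|z|)) > 0, where √ denotes the principal branch of the complex square root. -/

import Mathlib

/-- The principal branch of the complex square root, `√ζ = exp((1/2)·Log ζ)`. -/
noncomputable def csqrt (ζ : ℂ) : ℂ := ζ ^ (1 / 2 : ℂ)

lemma csqrt_pos {w : ℂ} (hw : 0 < w.im) :
    0 < (csqrt w).re ∧ 0 < (csqrt w).im := by
  have hw0 : w ≠ 0 := by intro h; simp [h] at hw
  have harg0 : 0 < w.arg := by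
    rcases lt_or_eq_of_le (Complex.arg_nonneg_iff.2 hw.le) with h | h
    · exact h
    · exact absurd (Complex.arg_eq_zero_iff.1 h.symm).2 hw.ne'
  have hargpi : w.arg < Real.pi := Complex.arg_lt_pi_iff.2 (Or.inr hw.ne')
  have hcs : csqrt w = Complex.exp ((1/2 : ℂ) * Complex.log w) := by
    rw [csqrt, Complex.cpow_def_of_ne_zero hw0, mul_comm]
  have him : ((1/2 : ℂ) * Complex.log w).im = w.arg / 2 := by
    simp [Complex.mul_im, Complex.log_im, Complex.log_re]; ring
  have hcos : 0 < Real.cos (w.arg / 2) :=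
    Real.cos_pos_of_mem_Ioo ⟨by linarith [Real.pi_pos], by linarith⟩
  have hsin : 0 < Real.sin (w.arg / 2) :=
    Real.sin_pos_of_pos_of_lt_pi (by linarith) (by linarith [Real.pi_pos])
  refine ⟨?_, ?_⟩
  · rw [hcs, Complex.exp_re, him]; positivity
  · rw [hcs, Complex.exp_im, him]; positivity

lemma csqrt_mul_self {w : ℂ} (hw0 : w ≠ 0) : csqrt w * csqrt w = w := by
  rw [csqrt, ← Complex.cpow_add _ _ hw0]
  norm_num

lemma csqrt_abs {w : ℂ} (hw0 : w ≠ 0) :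
    ‖csqrt w‖ = Real.sqrt ‖w‖ := by
  rw [csqrt, Complex.norm_cpow_of_ne_zero hw0]
  simp [Real.rpow_natCast, Real.sqrt_eq_rpow]

theorem stmt_14 (z : ℂ) (hz : z.im < 0) (t : ℝ) (ht : 0 < t) :
    (t * |z.im| / (2 * (Real.sqrt t + Real.sqrt (‖z‖))) ≤
        ∫ τ in (0 : ℝ)..t, (csqrt ((τ : ℂ) - z)).im) ∧
      0 < t * |z.im| / (2 * (Real.sqrt t + Real.sqrt (‖z‖))) := by
  set M : ℝ := Real.sqrt t + Real.sqrt (‖z‖) with hM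
  have hM0 : 0 < M :=
    lt_of_lt_of_le (Real.sqrt_pos.2 ht) (le_add_of_nonneg_right (Real.sqrt_nonneg _))
  set c : ℝ := |z.im| / (2 * M) with hc
  have hA : 0 < |z.im| := abs_pos.2 hz.ne
  constructor
  · -- pointwise bound
    have hpt : ∀ τ ∈ Set.Icc (0:ℝ) t, c ≤ (csqrt ((τ : ℂ) - z)).im := by
      intro τ hτ
      set w : ℂ := (τ : ℂ) - z with hw
      have hwim : w.im = |z.im| := by
        simp [hw, abs_of_neg hz]
      have hwimpos : 0 < w.im := hwim ▸ hA
      have hw0 : w ≠ 0 := by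
        intro h; rw [h] at hwimpos; simp at hwimpos
      obtain ⟨hre, him⟩ := csqrt_pos hwimpos
      have hsq : 2 * (csqrt w).re * (csqrt w).im = |z.im| := by
        have := congrArg Complex.im (csqrt_mul_self hw0)
        rw [Complex.mul_im, hwim] at this
        linarith
      have hreM : (csqrt w).re ≤ M := by
        have h1 : (csqrt w).re ≤ ‖csqrt w‖ := Complex.re_le_norm _
        rw [csqrt_abs hw0] at h1
        have h2 : ‖w‖ ≤ M ^ 2 := by
          have h3 : ‖w‖ ≤ τ + ‖z‖ := by
            calc ‖w‖ ≤ ‖(τ:ℂ)‖ + ‖z‖ :=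
                  norm_sub_le _ _
            _ = |τ| + ‖z‖ := by simp
            _ = τ + ‖z‖ := by rw [abs_of_nonneg hτ.1]
          have h4 : M ^ 2 = t + ‖z‖
              + 2 * Real.sqrt t * Real.sqrt (‖z‖) := by
            rw [hM, add_sq, Real.sq_sqrt ht.le, Real.sq_sqrt (norm_nonneg z)]
            ring
          nlinarith [Real.sqrt_nonneg t, Real.sqrt_nonneg (‖z‖), hτ.2]
        refine h1.trans ?_
        calc Real.sqrt (‖w‖) ≤ Real.sqrt (M ^ 2) := Real.sqrt_le_sqrt h2
        _ = M := by rw [Real.sqrt_sq hM0.le]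
      rw [hc, div_le_iff₀ (by positivity)]
      nlinarith
    -- integrability
    have hcont : Continuous fun τ : ℝ => (csqrt ((τ : ℂ) - z)).im := by
      refine Complex.continuous_im.comp ?_
      refine continuous_iff_continuousAt.2 fun τ => ?_
      have hmem : ((τ : ℂ) - z) ∈ Complex.slitPlane := by
        refine Complex.mem_slitPlane_iff.2 (Or.inr ?_)
        simp only [Complex.sub_im, Complex.ofReal_im, zero_sub, neg_ne_zero]
        exact hz.ne
      have hg : ContinuousAt (fun τ : ℝ => (τ : ℂ) - z) τ :=
        (Complex.continuous_ofReal.sub continuous_const).continuousAt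
      exact ContinuousAt.comp (g := fun w : ℂ => w ^ (1/2 : ℂ))
        (continuousAt_cpow_const hmem) hg
    have hint : IntervalIntegrable (fun τ : ℝ => (csqrt ((τ : ℂ) - z)).im)
        MeasureTheory.volume 0 t := hcont.intervalIntegrable _ _
    have hmono := intervalIntegral.integral_mono_on ht.le
      (intervalIntegrable_const (c := c)) hint hpt
    rw [intervalIntegral.integral_const, smul_eq_mul, sub_zero] at hmono
    calc t * |z.im| / (2 * M) = t * c := by rw [hc]; ring
    _ ≤ _ := hmono
  · positivity
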